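/- Assume CH and let T, U be normal countably closed ω₂-Aronszajn trees with levels of size ω₁. Let (A,f), (B,g) ∈ P(T,U) and γ < ξ with γ ∈ A, ξ ∈ B such that: A ⊆ ξ; the restrictions of (A,f) below γ and of (B,g) below ξ coincide; (A,f) is injective on γ and (B,g) is injective on ξ; every node of dom(f) of height γ is T-incomparable with every node of dom(g) of height ξ; and every node of ran(f) of height γ is U-incomparable with every node of ran(g) of height ξ. Then (A,f) and (B,g) are compatible in P(T,U). -/

import Mathlib

universe u v

/-- A set-theoretic tree: a strict partial order in which the set of predecessors
of any node is well-ordered. -/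
structure STree (α : Type u) where
  lt : α → α → Prop
  irrefl : ∀ x, ¬ lt x x
  trans : ∀ {x y z}, lt x y → lt y z → lt x z
  wo : ∀ x : α, IsWellOrder {y // lt y x} (fun a b => lt a.1 b.1)

namespace STree

variable {α β : Type u}

/-- The height of a node: the order type of its set of predecessors. -/
noncomputable def ht (T : STree α) (x : α) : Ordinal :=
  @Ordinal.type {y // T.lt y x} (fun a b => T.lt a.1 b.1) (T.wo x)

/-- The reflexive closure of the tree order. -/
def le (T : STree α) (x y : α) : Prop := T.lt x y ∨ x = y

/-- `T` is a `κ`-tree: height `κ` and all levels of size `< κ`. -/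
def IsKTree (T : STree α) (κ : Cardinal) : Prop :=
  (∀ x, T.ht x < κ.ord) ∧ (∀ γ < κ.ord, ∃ x, T.ht x = γ) ∧
    ∀ γ : Ordinal, Cardinal.mk {x // T.ht x = γ} < κ

/-- `T` is a normal `κ`-tree. -/
def IsNormalTree (T : STree α) (κ : Cardinal) : Prop :=
  (∀ x, ∀ γ, T.ht x < γ → γ < κ.ord → ∃ y, T.lt x y ∧ T.ht y = γ) ∧
  (∀ x y, x ≠ y → T.ht x = T.ht y → Order.IsSuccLimit (T.ht x) →
    ∃ z, T.lt z x ∧ ¬ T.lt z y) ∧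
  (∀ x, ∃ y z, T.lt x y ∧ T.lt x z ∧ ¬ T.le y z ∧ ¬ T.le z y)

/-- A chain in `T`: a linearly ordered subset. -/
def IsChain (T : STree α) (b : Set α) : Prop :=
  ∀ x ∈ b, ∀ y ∈ b, T.le x y ∨ T.le y x

/-- `T` is countably closed: every countable chain has an upper bound. -/
def CClosed (T : STree α) : Prop :=
  ∀ b : Set α, b.Countable → T.IsChain b → ∃ z, ∀ x ∈ b, T.le x z

/-- `T` is a `κ`-Aronszajn tree: a `κ`-tree with no cofinal chain. -/
def Aronszajn (T : STree α) (κ : Cardinal) : Prop :=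
  T.IsKTree κ ∧ ¬ ∃ b : Set α, T.IsChain b ∧ ∀ γ < κ.ord, ∃ x ∈ b, T.ht x = γ

end STree

/-- The continuum hypothesis. -/
def CH : Prop := (2 : Cardinal.{0}) ^ Cardinal.aleph0 = Cardinal.aleph 1

/-- A pair `(A, F)` as in the forcing `ℙ(T,U)`: a set of ordinals together with the
graph of a partial function from `T` to `U`. -/
structure PPair (α β : Type u) where
  A : Set Ordinal.{v}
  F : Set (α × β)

/-- Ordinals below `ω₂` of cofinality `ω₁`. -/
def cofW1 : Set Ordinal :=
  {γ | γ < (Cardinal.aleph 2).ord ∧ Ordinal.cof γ = Cardinal.aleph 1}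

/-- The domain of a graph. -/
def dom' {α β : Type u} (F : Set (α × β)) : Set α := {x | ∃ y, (x, y) ∈ F}

/-- `p = (A, F)` is a condition in the forcing poset `ℙ(T,U)`. -/
def IsCond {α β : Type u} (T : STree α) (U : STree β) (p : PPair α β) : Prop :=
  p.A.Countable ∧ p.A ⊆ cofW1 ∧
  (∀ q ∈ p.F, ∀ r ∈ p.F, q.1 = r.1 → q.2 = r.2) ∧
  (∀ q ∈ p.F, ∀ r ∈ p.F, q.2 = r.2 → q.1 = r.1) ∧
  (dom' p.F).Countable ∧
  (∀ q ∈ p.F, T.ht q.1 ∈ p.A) ∧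
  (∀ q ∈ p.F, ∀ z : α, T.lt z q.1 → T.ht z ∈ p.A → z ∈ dom' p.F) ∧
  (∀ q ∈ p.F, ∀ b ∈ p.A, T.ht q.1 < b → ∃ r ∈ p.F, T.ht r.1 = b ∧ T.lt q.1 r.1) ∧
  (∀ q ∈ p.F, U.ht q.2 = T.ht q.1) ∧
  (∀ q ∈ p.F, ∀ r ∈ p.F, T.lt q.1 r.1 → U.lt q.2 r.2)

/-- The order on `ℙ(T,U)`: `p ≤ q` iff `p` extends `q` in both coordinates. -/
def CondLe {α β : Type u} (p q : PPair α β) : Prop := q.A ⊆ p.A ∧ q.F ⊆ p.F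

/-- A normal countably closed `ω₂`-Aronszajn tree all of whose levels have size `ω₁`. -/
def NiceTree {α : Type u} (T : STree α) : Prop :=
  T.IsKTree (Cardinal.aleph 2) ∧ T.IsNormalTree (Cardinal.aleph 2) ∧
    T.CClosed ∧ T.Aronszajn (Cardinal.aleph 2) ∧
    ∀ γ < (Cardinal.aleph 2).ord, Cardinal.mk {x // T.ht x = γ} = Cardinal.aleph 1

/-- `p` is injective on level `b`: distinct nodes of `dom f_p` of height `b` are
separated by their projections to some level in `A_p ∩ b`. -/
def InjOn' {α β : Type u} (T : STree α) (p : PPair α β) (b : Ordinal) : Prop :=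
  ∀ q ∈ p.F, ∀ r ∈ p.F, T.ht q.1 = b → T.ht r.1 = b → q.1 ≠ r.1 →
    ∃ γ ∈ p.A, γ < b ∧
      ∀ z w : α, T.le z q.1 → T.ht z = γ → T.le w r.1 → T.ht w = γ → z ≠ w

/-- The restriction `p ↾ γ` of a condition to levels below `γ`. -/
def restrC {α β : Type u} (T : STree α) (p : PPair α β) (γ : Ordinal) : PPair α β :=
  ⟨p.A ∩ Set.Iio γ, {r ∈ p.F | T.ht r.1 < γ}⟩


/-!
A common extension is built in three steps. First `q` is enlarged by the levels `δ ∈ A_p`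
with `γ ≤ δ`, adding the projections to these levels of its nodes of height `≥ ξ`. Injectivity
of `q` on `ξ` keeps this a partial isomorphism: distinct nodes of level `ξ` are separated at a
level of `A_q ∩ ξ ⊆ γ`, so their projections to `δ` differ in `T` and in `U`. The enlarged `q`
agrees with `p` below `γ`, and by the incomparability hypotheses its level `γ` is disjoint from
that of `p` in both trees, so its union with `p` is still a partial isomorphism closed under
projection to its levels. Finally any such pre-condition extends to a condition with the same
levels: take a maximal chain through each node, bound it (countable closure, normality) by
nodes of a common height above all levels, and add the projections of the bound to the levels
the chain misses; maximality of the chains keeps the added nodes from colliding.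
-/

namespace STree

variable {α : Type u} (T : STree α)

theorem le_rfl {x : α} : T.le x x := Or.inr rfl

theorem lt_of_lt_of_le {x y z : α} (h : T.lt x y) (h' : T.le y z) : T.lt x z := by
  rcases h' with h' | rfl
  exacts [T.trans h h', h]

theorem lt_of_le_of_lt {x y z : α} (h : T.le x y) (h' : T.lt y z) : T.lt x z := by
  rcases h with h | rfl
  exacts [T.trans h h', h']

theorem le_trans {x y z : α} (h : T.le x y) (h' : T.le y z) : T.le x z := by
  rcases h with h | rfl
  exacts [Or.inl (T.lt_of_lt_of_le h h'), h']

abbrev predRel (z : α) (a b : {y // T.lt y z}) : Prop := T.lt a.1 b.1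

instance (z : α) : IsWellOrder {y // T.lt y z} (T.predRel z) := T.wo z

theorem ht_eq_typein {x z : α} (h : T.lt x z) :
    T.ht x = Ordinal.typein (T.predRel z) ⟨x, h⟩ := by
  rw [← Ordinal.type_subrel (T.predRel z)]
  exact Ordinal.type_eq.2 ⟨RelIso.mk
    ⟨fun y => ⟨⟨y.1, T.trans y.2 h⟩, y.2⟩, fun y => ⟨y.1.1, y.2⟩, fun _ => rfl,
      fun _ => rfl⟩
    Iff.rfl⟩

theorem ht_lt_ht {x z : α} (h : T.lt x z) : T.ht x < T.ht z := by
  rw [T.ht_eq_typein h]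
  exact Ordinal.typein_lt_type _ _

theorem ht_le_ht {x z : α} (h : T.le x z) : T.ht x ≤ T.ht z := by
  rcases h with h | rfl
  exacts [(T.ht_lt_ht h).le, _root_.le_rfl]

theorem exists_lt_ht_eq {z : α} {δ : Ordinal} (h : δ < T.ht z) :
    ∃ y, T.lt y z ∧ T.ht y = δ := by
  obtain ⟨a, ha⟩ := Ordinal.typein_surj (T.predRel z) h
  exact ⟨a.1, a.2, (T.ht_eq_typein a.2).trans ha⟩

theorem lt_trichotomy_of_lt {x y z : α} (hx : T.lt x z) (hy : T.lt y z) :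
    T.lt x y ∨ x = y ∨ T.lt y x := by
  rcases trichotomous_of (T.predRel z) ⟨x, hx⟩ ⟨y, hy⟩ with h | h | h
  exacts [Or.inl h, Or.inr (Or.inl (congrArg Subtype.val h)), Or.inr (Or.inr h)]

theorem lt_of_le_of_le_of_ht_lt {x y z : α} (hx : T.le x z) (hy : T.le y z)
    (h : T.ht x < T.ht y) : T.lt x y := by
  rcases hy with hy | rfl
  · rcases hx with hx | rfl
    · rcases T.lt_trichotomy_of_lt hx hy with h' | rfl | h'
      exacts [h', absurd h (lt_irrefl _), absurd (T.ht_lt_ht h') h.not_gt]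
    · exact absurd (T.ht_lt_ht hy) h.not_gt
  · rcases hx with hx | rfl
    exacts [hx, absurd h (lt_irrefl _)]

theorem eq_of_le_of_le_of_ht_eq {x y z : α} (hx : T.le x z) (hy : T.le y z)
    (h : T.ht x = T.ht y) : x = y := by
  rcases hx with hx | rfl
  · rcases hy with hy | rfl
    · exact congrArg Subtype.val <| Ordinal.typein_injective (T.predRel z) <|
        (T.ht_eq_typein hx).symm.trans (h.trans (T.ht_eq_typein hy))
    · exact absurd h (T.ht_lt_ht hx).ne
  · rcases hy with hy | rfl
    exacts [absurd h (T.ht_lt_ht hy).ne', rfl]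

/-- The node of height `δ` below or at `z`; junk value `z` when `T.ht z < δ`. -/
noncomputable def proj (z : α) (δ : Ordinal) : α :=
  if h : δ < T.ht z then (T.exists_lt_ht_eq h).choose else z

variable {T}

theorem proj_lt {z : α} {δ : Ordinal} (h : δ < T.ht z) : T.lt (T.proj z δ) z := by
  rw [proj, dif_pos h]
  exact (T.exists_lt_ht_eq h).choose_spec.1

theorem proj_le {z : α} {δ : Ordinal} (h : δ ≤ T.ht z) : T.le (T.proj z δ) z := by
  rcases h.lt_or_eq with h | rfl
  · exact Or.inl (proj_lt h)
  · exact Or.inr (dif_neg (lt_irrefl _))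

theorem ht_proj {z : α} {δ : Ordinal} (h : δ ≤ T.ht z) : T.ht (T.proj z δ) = δ := by
  rcases h.lt_or_eq with h | rfl
  · rw [proj, dif_pos h]
    exact (T.exists_lt_ht_eq h).choose_spec.2
  · rw [proj, dif_neg (lt_irrefl _)]

theorem proj_eq_of_le {x z : α} {δ : Ordinal} (hle : T.le x z) (hx : T.ht x = δ) :
    T.proj z δ = x := by
  have hδ : δ ≤ T.ht z := hx ▸ T.ht_le_ht hle
  exact T.eq_of_le_of_le_of_ht_eq (proj_le hδ) hle ((ht_proj hδ).trans hx.symm)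

theorem proj_ht (z : α) : T.proj z (T.ht z) = z := proj_eq_of_le T.le_rfl rfl

theorem proj_eq_proj_of_le {x z : α} {δ : Ordinal} (hle : T.le x z) (hδ : δ ≤ T.ht x) :
    T.proj x δ = T.proj z δ :=
  (proj_eq_of_le (T.le_trans (proj_le hδ) hle) (ht_proj hδ)).symm

theorem proj_proj {z : α} {δ δ' : Ordinal} (h : δ ≤ δ') (h' : δ' ≤ T.ht z) :
    T.proj (T.proj z δ') δ = T.proj z δ :=
  proj_eq_proj_of_le (proj_le h') ((ht_proj h').symm ▸ h)

theorem lt_proj {x z : α} {δ : Ordinal} (hle : T.le x z) (hx : T.ht x < δ)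
    (hδ : δ ≤ T.ht z) : T.lt x (T.proj z δ) :=
  T.lt_of_le_of_le_of_ht_lt hle (proj_le hδ) ((ht_proj hδ).symm ▸ hx)

theorem proj_lt_proj {z : α} {δ δ' : Ordinal} (h : δ < δ') (h' : δ' ≤ T.ht z) :
    T.lt (T.proj z δ) (T.proj z δ') :=
  lt_proj (proj_le (h.le.trans h')) ((ht_proj (h.le.trans h')).symm ▸ h) h'

end STree

section PreCond

variable {α β : Type u} {T : STree α} {U : STree β}

noncomputable def projPair (T : STree α) (U : STree β) (x : α × β) (δ : Ordinal) : α × β :=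
  (T.proj x.1 δ, U.proj x.2 δ)

@[simp] theorem projPair_fst (x : α × β) (δ : Ordinal) :
    (projPair T U x δ).1 = T.proj x.1 δ :=
  rfl

@[simp] theorem projPair_snd (x : α × β) (δ : Ordinal) :
    (projPair T U x δ).2 = U.proj x.2 δ :=
  rfl

theorem projPair_projPair {x : α × β} (hx : U.ht x.2 = T.ht x.1) {δ δ' : Ordinal}
    (h : δ ≤ δ') (h' : δ' ≤ T.ht x.1) :
    projPair T U (projPair T U x δ') δ = projPair T U x δ :=
  Prod.ext (STree.proj_proj h h') (STree.proj_proj h (hx ▸ h'))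

/-- The clauses of `IsCond` on the graph alone, without the upward-extension clause;
downward closure is phrased through `projPair`. -/
structure IsPreCond (T : STree α) (U : STree β) (A : Set Ordinal) (W : Set (α × β)) :
    Prop where
  countable : W.Countable
  injOn_fst : Set.InjOn Prod.fst W
  injOn_snd : Set.InjOn Prod.snd W
  ht_mem : ∀ x ∈ W, T.ht x.1 ∈ A
  ht_snd : ∀ x ∈ W, U.ht x.2 = T.ht x.1
  projPair_mem : ∀ x ∈ W, ∀ δ ∈ A, δ ≤ T.ht x.1 → projPair T U x δ ∈ W
  snd_lt : ∀ x ∈ W, ∀ y ∈ W, T.lt x.1 y.1 → U.lt x.2 y.2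

theorem IsCond.isPreCond {p : PPair α β} (hp : IsCond T U p) : IsPreCond T U p.A p.F := by
  obtain ⟨-, -, hfn, hcofn, hdom, hht, hdown, -, hsnd, hlt⟩ := hp
  have injOn_fst : Set.InjOn Prod.fst p.F := fun x hx y hy h => Prod.ext h (hfn x hx y hy h)
  refine ⟨?_, injOn_fst, fun x hx y hy h => Prod.ext (hcofn x hx y hy h) h, hht, hsnd,
    fun x hx δ hδ hδx => ?_, hlt⟩
  · exact Set.MapsTo.countable_of_injOn (t := dom' p.F) (fun x hx => ⟨x.2, hx⟩) injOn_fst hdom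
  · rcases hδx.lt_or_eq with hδx | rfl
    · obtain ⟨y, hy⟩ :=
        hdown x hx _ (STree.proj_lt hδx) ((STree.ht_proj hδx.le).symm ▸ hδ)
      have hyx : U.lt y x.2 := hlt _ hy x hx (STree.proj_lt hδx)
      have hyδ : U.ht y = δ := (hsnd _ hy).trans (STree.ht_proj hδx.le)
      rwa [projPair, STree.proj_eq_of_le (Or.inl hyx) hyδ]
    · rw [projPair, STree.proj_ht, ← hsnd x hx, STree.proj_ht]
      exact hx

namespace IsPreCond

variable {A : Set Ordinal} {W : Set (α × β)}

theorem ht_projPair (h : IsPreCond T U A W) {t : α × β} (ht : t ∈ W) {δ : Ordinal}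
    (hδ : δ ≤ T.ht t.1) : T.ht (projPair T U t δ).1 = δ ∧ U.ht (projPair T U t δ).2 = δ :=
  ⟨STree.ht_proj hδ, STree.ht_proj ((h.ht_snd t ht).symm ▸ hδ)⟩

theorem fst_lt_of_snd_lt (h : IsPreCond T U A W) {x y : α × β} (hx : x ∈ W) (hy : y ∈ W)
    (hlt : U.lt x.2 y.2) : T.lt x.1 y.1 := by
  have hxy : T.ht x.1 < T.ht y.1 := by
    rw [← h.ht_snd x hx, ← h.ht_snd y hy]
    exact U.ht_lt_ht hlt
  have hproj : projPair T U y (T.ht x.1) = x :=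
    h.injOn_snd (h.projPair_mem y hy _ (h.ht_mem x hx) hxy.le) hx
      (STree.proj_eq_of_le (Or.inl hlt) (h.ht_snd x hx))
  rw [← hproj]
  exact STree.proj_lt hxy

theorem isCond (h : IsPreCond T U A W) (hAc : A.Countable) (hA : A ⊆ cofW1)
    (hup : ∀ x ∈ W, ∀ b ∈ A, T.ht x.1 < b → ∃ y ∈ W, T.ht y.1 = b ∧ T.lt x.1 y.1) :
    IsCond T U ⟨A, W⟩ := by
  have hdom : dom' W ⊆ Prod.fst '' W := fun z ⟨y, hy⟩ => ⟨(z, y), hy, rfl⟩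
  refine ⟨hAc, hA, fun x hx y hy hxy => congrArg Prod.snd (h.injOn_fst hx hy hxy),
    fun x hx y hy hxy => congrArg Prod.fst (h.injOn_snd hx hy hxy),
    (h.countable.image Prod.fst).mono hdom, h.ht_mem,
    fun x hx z hz hzA => ?_, hup, h.ht_snd, h.snd_lt⟩
  have hmem := h.projPair_mem x hx _ hzA (T.ht_lt_ht hz).le
  rw [projPair, STree.proj_eq_of_le (Or.inl hz) rfl] at hmem
  exact ⟨_, hmem⟩

end IsPreCond

end PreCond

section LowerProj

variable {α β : Type u} {T : STree α} {U : STree β} {A D : Set Ordinal} {W : Set (α × β)}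
  {ξ : Ordinal}

def lowerProj (T : STree α) (U : STree β) (W : Set (α × β)) (ξ : Ordinal) (D : Set Ordinal) :
    Set (α × β) :=
  {x | ∃ t ∈ W, ξ ≤ T.ht t.1 ∧ ∃ δ ∈ D, x = projPair T U t δ}

def InGapBelow (D A : Set Ordinal) (ξ : Ordinal) : Prop :=
  ∀ δ ∈ D, δ < ξ ∧ ∀ a ∈ A, a < ξ → a < δ

theorem InGapBelow.notMem {D A : Set Ordinal} {ξ δ : Ordinal} (hD : InGapBelow D A ξ)
    (hδ : δ ∈ D) : δ ∉ A :=
  fun hδA => lt_irrefl δ ((hD δ hδ).2 δ hδA (hD δ hδ).1)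

theorem countable_lowerProj (hW : W.Countable) (hD : D.Countable) :
    (lowerProj T U W ξ D).Countable :=
  ((hW.prod hD).image fun p => projPair T U p.1 p.2).mono <| by
    rintro _ ⟨t, ht, -, δ, hδ, rfl⟩
    exact ⟨(t, δ), ⟨ht, hδ⟩, rfl⟩

namespace IsPreCond

theorem le_ht_of_lt_ht (h : IsPreCond T U A W) (hD : InGapBelow D A ξ)
    {x : α × β} (hx : x ∈ W) {δ : Ordinal} (hδ : δ ∈ D) (hδx : δ < T.ht x.1) :
    ξ ≤ T.ht x.1 :=
  not_lt.1 fun hxξ => ((hD δ hδ).2 _ (h.ht_mem x hx) hxξ).not_gt hδx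

theorem exists_proj_ne (h : IsPreCond T U A W) (hξ : ξ ∈ A)
    (hinj : InjOn' T ⟨A, W⟩ ξ) {t t' : α × β} (ht : t ∈ W) (ht' : t' ∈ W)
    (htξ : ξ ≤ T.ht t.1) (htξ' : ξ ≤ T.ht t'.1)
    (hne : projPair T U t ξ ≠ projPair T U t' ξ) :
    ∃ a ∈ A, a < ξ ∧ T.proj t.1 a ≠ T.proj t'.1 a ∧ U.proj t.2 a ≠ U.proj t'.2 a := by
  have hs := h.projPair_mem t ht ξ hξ htξ
  have hs' := h.projPair_mem t' ht' ξ hξ htξ'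
  obtain ⟨a, ha, haξ, hsep⟩ := hinj _ hs _ hs' (STree.ht_proj htξ) (STree.ht_proj htξ')
    fun h1 => hne (h.injOn_fst hs hs' h1)
  have hat : a ≤ T.ht (T.proj t.1 ξ) := (STree.ht_proj htξ).symm ▸ haξ.le
  have hat' : a ≤ T.ht (T.proj t'.1 ξ) := (STree.ht_proj htξ').symm ▸ haξ.le
  have hfst : T.proj t.1 a ≠ T.proj t'.1 a := by
    rw [← STree.proj_proj haξ.le htξ, ← STree.proj_proj haξ.le htξ']
    exact hsep _ _ (STree.proj_le hat) (STree.ht_proj hat) (STree.proj_le hat')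
      (STree.ht_proj hat')
  refine ⟨a, ha, haξ, hfst, fun hsnd => hfst ?_⟩
  exact congrArg Prod.fst (h.injOn_snd (h.projPair_mem t ht a ha (haξ.le.trans htξ))
    (h.projPair_mem t' ht' a ha (haξ.le.trans htξ')) hsnd)

theorem projPair_eq_of_proj_eq (h : IsPreCond T U A W) (hξ : ξ ∈ A)
    (hinj : InjOn' T ⟨A, W⟩ ξ) (hD : InGapBelow D A ξ) {t t' : α × β}
    (ht : t ∈ W) (ht' : t' ∈ W) (htξ : ξ ≤ T.ht t.1) (htξ' : ξ ≤ T.ht t'.1)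
    {δ : Ordinal} (hδ : δ ∈ D) (hδξ : δ ≤ ξ)
    (heq : T.proj t.1 δ = T.proj t'.1 δ ∨ U.proj t.2 δ = U.proj t'.2 δ) :
    projPair T U t δ = projPair T U t' δ := by
  by_cases hξeq : projPair T U t ξ = projPair T U t' ξ
  · rw [← projPair_projPair (h.ht_snd t ht) hδξ htξ, hξeq,
      projPair_projPair (h.ht_snd t' ht') hδξ htξ']
  -- otherwise `hinj` separates them at a level of `A` below `ξ`, hence below `δ`
  obtain ⟨a, ha, haξ, hfst, hsnd⟩ := h.exists_proj_ne hξ hinj ht ht' htξ htξ' hξeq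
  have haδ : a ≤ δ := ((hD δ hδ).2 a ha haξ).le
  have hδt : δ ≤ U.ht t.2 := (h.ht_snd t ht).symm ▸ hδξ.trans htξ
  have hδt' : δ ≤ U.ht t'.2 := (h.ht_snd t' ht').symm ▸ hδξ.trans htξ'
  rcases heq with heq | heq
  · refine absurd ?_ hfst
    rw [← STree.proj_proj haδ (hδξ.trans htξ), heq, STree.proj_proj haδ (hδξ.trans htξ')]
  · refine absurd ?_ hsnd
    rw [← STree.proj_proj haδ hδt, heq, STree.proj_proj haδ hδt']

theorem ht_mem_lowerProj (h : IsPreCond T U A W) (hD : InGapBelow D A ξ) {x : α × β}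
    (hx : x ∈ lowerProj T U W ξ D) : T.ht x.1 ∈ D ∧ U.ht x.2 = T.ht x.1 := by
  obtain ⟨t, ht, htξ, δ, hδ, rfl⟩ := hx
  obtain ⟨h1, h2⟩ := h.ht_projPair ht ((hD δ hδ).1.le.trans htξ)
  exact ⟨h1.symm ▸ hδ, h2.trans h1.symm⟩

theorem ht_snd_union_lowerProj (h : IsPreCond T U A W) (hD : InGapBelow D A ξ) :
    ∀ x ∈ W ∪ lowerProj T U W ξ D, U.ht x.2 = T.ht x.1
  | x, .inl hx => h.ht_snd x hx
  | _, .inr hx => (h.ht_mem_lowerProj hD hx).2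

theorem eq_of_mem_union_lowerProj (h : IsPreCond T U A W) (hξ : ξ ∈ A)
    (hinj : InjOn' T ⟨A, W⟩ ξ) (hD : InGapBelow D A ξ) {x y : α × β}
    (hx : x ∈ W ∪ lowerProj T U W ξ D) (hy : y ∈ W ∪ lowerProj T U W ξ D)
    (hxy : x.1 = y.1 ∨ x.2 = y.2) : x = y := by
  have hht : T.ht x.1 = T.ht y.1 := by
    rcases hxy with hxy | hxy
    · rw [hxy]
    · rw [← h.ht_snd_union_lowerProj hD x hx, ← h.ht_snd_union_lowerProj hD y hy, hxy]
  rcases hx with hx | hx <;> rcases hy with hy | hy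
  · exact hxy.elim (h.injOn_fst hx hy ·) (h.injOn_snd hx hy ·)
  · exact absurd (hht ▸ h.ht_mem x hx) (hD.notMem (h.ht_mem_lowerProj hD hy).1)
  · exact absurd (hht ▸ h.ht_mem y hy) (hD.notMem (h.ht_mem_lowerProj hD hx).1)
  obtain ⟨t, ht, htξ, δ, hδ, rfl⟩ := hx
  obtain ⟨t', ht', htξ', δ', hδ', rfl⟩ := hy
  obtain rfl : δ = δ' := by
    rwa [(h.ht_projPair ht ((hD δ hδ).1.le.trans htξ)).1,
      (h.ht_projPair ht' ((hD δ' hδ').1.le.trans htξ')).1] at hht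
  exact h.projPair_eq_of_proj_eq hξ hinj hD ht ht' htξ htξ' hδ (hD δ hδ).1.le hxy

theorem projPair_mem_union_lowerProj (h : IsPreCond T U A W) (hD : InGapBelow D A ξ) :
    ∀ x ∈ W ∪ lowerProj T U W ξ D, ∀ a ∈ A ∪ D, a ≤ T.ht x.1 →
      projPair T U x a ∈ W ∪ lowerProj T U W ξ D := by
  have high : ∀ t ∈ W, ξ ≤ T.ht t.1 → ∀ a ∈ A ∪ D, a ≤ T.ht t.1 →
      projPair T U t a ∈ W ∪ lowerProj T U W ξ D := by
    rintro t ht htξ a (ha | ha) hat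
    exacts [Or.inl (h.projPair_mem t ht a ha hat), Or.inr ⟨t, ht, htξ, a, ha, rfl⟩]
  rintro x (hx | ⟨t, ht, htξ, δ, hδ, rfl⟩) a ha hax
  · rcases ha with ha | ha
    · exact Or.inl (h.projPair_mem x hx a ha hax)
    have hax' : a < T.ht x.1 := hax.lt_of_ne fun hax' => hD.notMem ha (hax' ▸ h.ht_mem x hx)
    exact high x hx (h.le_ht_of_lt_ht hD hx ha hax') a (Or.inr ha) hax
  · have hδt : δ ≤ T.ht t.1 := (hD δ hδ).1.le.trans htξ
    rw [(h.ht_projPair ht hδt).1] at hax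
    rw [projPair_projPair (h.ht_snd t ht) hax hδt]
    exact high t ht htξ a ha (hax.trans hδt)

theorem proj_snd_lt_of_proj_fst_lt (h : IsPreCond T U A W) (hξ : ξ ∈ A)
    (hinj : InjOn' T ⟨A, W⟩ ξ) (hD : InGapBelow D A ξ) {t t' : α × β} (ht : t ∈ W)
    (ht' : t' ∈ W) (htξ : ξ ≤ T.ht t.1) (htξ' : ξ ≤ T.ht t'.1) {δ ε : Ordinal}
    (hδ : δ ∈ D) (hε : ε ≤ T.ht t'.1) (hlt : T.lt (T.proj t.1 δ) (T.proj t'.1 ε)) :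
    U.lt (U.proj t.2 δ) (U.proj t'.2 ε) := by
  have hδt : δ ≤ T.ht t.1 := (hD δ hδ).1.le.trans htξ
  have hδε : δ < ε := by
    simpa only [STree.ht_proj hδt, STree.ht_proj hε] using T.ht_lt_ht hlt
  have heq : projPair T U t' δ = projPair T U t δ := by
    refine h.projPair_eq_of_proj_eq hξ hinj hD ht' ht htξ' htξ hδ (hD δ hδ).1.le (Or.inl ?_)
    rw [← STree.proj_proj hδε.le hε, STree.proj_eq_of_le (Or.inl hlt) (STree.ht_proj hδt)]
  rw [← projPair_snd, ← heq]
  exact STree.proj_lt_proj hδε ((h.ht_snd t' ht').symm ▸ hε)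

theorem snd_lt_union_lowerProj (h : IsPreCond T U A W) (hξ : ξ ∈ A)
    (hinj : InjOn' T ⟨A, W⟩ ξ) (hD : InGapBelow D A ξ) :
    ∀ x ∈ W ∪ lowerProj T U W ξ D, ∀ y ∈ W ∪ lowerProj T U W ξ D,
      T.lt x.1 y.1 → U.lt x.2 y.2 := by
  rintro x (hx | ⟨t, ht, htξ, δ, hδ, rfl⟩) y hy hlt
  · rcases hy with hy | ⟨t', ht', htξ', δ', hδ', rfl⟩
    · exact h.snd_lt x hx y hy hlt
    have hδt' : δ' ≤ T.ht t'.1 := (hD δ' hδ').1.le.trans htξ'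
    have hxt' : T.lt x.1 t'.1 := T.lt_of_lt_of_le hlt (STree.proj_le hδt')
    refine STree.lt_proj (Or.inl (h.snd_lt x hx t' ht' hxt')) ?_ ((h.ht_snd t' ht').symm ▸ hδt')
    simpa only [h.ht_snd x hx, projPair_fst, STree.ht_proj hδt'] using T.ht_lt_ht hlt
  · have hδt : δ ≤ T.ht t.1 := (hD δ hδ).1.le.trans htξ
    obtain ⟨t', ε, ht', htξ', hε, rfl⟩ :
      ∃ t' ε, t' ∈ W ∧ ξ ≤ T.ht t'.1 ∧ ε ≤ T.ht t'.1 ∧ y = projPair T U t' ε := by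
      rcases hy with hy | ⟨t', ht', htξ', δ', hδ', rfl⟩
      · have hδy : δ < T.ht y.1 := by
          simpa only [projPair_fst, STree.ht_proj hδt] using T.ht_lt_ht hlt
        refine ⟨y, T.ht y.1, hy, h.le_ht_of_lt_ht hD hy hδ hδy, le_rfl, ?_⟩
        rw [projPair, STree.proj_ht, ← h.ht_snd y hy, STree.proj_ht]
      · exact ⟨t', δ', ht', htξ', (hD δ' hδ').1.le.trans htξ', rfl⟩
    exact h.proj_snd_lt_of_proj_fst_lt hξ hinj hD ht ht' htξ htξ' hδ hε hlt

theorem union_lowerProj (h : IsPreCond T U A W) (hξ : ξ ∈ A) (hinj : InjOn' T ⟨A, W⟩ ξ)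
    (hDc : D.Countable) (hD : InGapBelow D A ξ) :
    IsPreCond T U (A ∪ D) (W ∪ lowerProj T U W ξ D) where
  countable := h.countable.union (countable_lowerProj h.countable hDc)
  injOn_fst _ hx _ hy hxy := h.eq_of_mem_union_lowerProj hξ hinj hD hx hy (Or.inl hxy)
  injOn_snd _ hx _ hy hxy := h.eq_of_mem_union_lowerProj hξ hinj hD hx hy (Or.inr hxy)
  ht_mem
    | x, .inl hx => Or.inl (h.ht_mem x hx)
    | _, .inr hx => Or.inr (h.ht_mem_lowerProj hD hx).1
  ht_snd := h.ht_snd_union_lowerProj hD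
  projPair_mem := h.projPair_mem_union_lowerProj hD
  snd_lt := h.snd_lt_union_lowerProj hξ hinj hD

end IsPreCond

end LowerProj

section Amalgamation

variable {α β : Type u} {T : STree α} {U : STree β} {A₁ A₂ : Set Ordinal}
  {W₁ W₂ : Set (α × β)} {γ : Ordinal}

structure Amalgamable (T : STree α) (U : STree β) (A₁ : Set Ordinal) (W₁ : Set (α × β))
    (A₂ : Set Ordinal) (W₂ : Set (α × β)) (γ : Ordinal) : Prop where
  left : IsPreCond T U A₁ W₁
  right : IsPreCond T U A₂ W₂
  mem_left : γ ∈ A₁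
  mem_right : γ ∈ A₂
  mem_levels_left : ∀ a ∈ A₂, ∀ x ∈ W₁, a < T.ht x.1 → a ∈ A₁
  mem_levels_right : ∀ a ∈ A₁, ∀ y ∈ W₂, a < T.ht y.1 → a ∈ A₂
  mem_right_of_lt : ∀ x ∈ W₁, T.ht x.1 < γ → x ∈ W₂
  mem_left_of_lt : ∀ y ∈ W₂, T.ht y.1 < γ → y ∈ W₁
  ne_of_ht_eq : ∀ x ∈ W₁, ∀ y ∈ W₂, T.ht x.1 = γ → T.ht y.1 = γ →
    x.1 ≠ y.1 ∧ x.2 ≠ y.2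

namespace Amalgamable

theorem symm (h : Amalgamable T U A₁ W₁ A₂ W₂ γ) :
    Amalgamable T U A₂ W₂ A₁ W₁ γ where
  left := h.right
  right := h.left
  mem_left := h.mem_right
  mem_right := h.mem_left
  mem_levels_left := h.mem_levels_right
  mem_levels_right := h.mem_levels_left
  mem_right_of_lt := h.mem_left_of_lt
  mem_left_of_lt := h.mem_right_of_lt
  ne_of_ht_eq x hx y hy hxγ hyγ :=
    (h.ne_of_ht_eq y hy x hx hyγ hxγ).imp (fun h' e => h' e.symm) (fun h' e => h' e.symm)

theorem proj_ne (h : Amalgamable T U A₁ W₁ A₂ W₂ γ) {x y : α × β} (hx : x ∈ W₁)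
    (hy : y ∈ W₂)     (hxγ : γ ≤ T.ht x.1) (hyγ : γ ≤ T.ht y.1) :
    T.proj x.1 γ ≠ T.proj y.1 γ ∧ U.proj x.2 γ ≠ U.proj y.2 γ :=
  h.ne_of_ht_eq _ (h.left.projPair_mem x hx γ h.mem_left hxγ)
    _ (h.right.projPair_mem y hy γ h.mem_right hyγ) (STree.ht_proj hxγ) (STree.ht_proj hyγ)

theorem eq_of_fst_eq_or_snd_eq (h : Amalgamable T U A₁ W₁ A₂ W₂ γ) {x y : α × β}
    (hx : x ∈ W₁) (hy : y ∈ W₂) (hxy : x.1 = y.1 ∨ x.2 = y.2) : x = y := by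
  have hht : T.ht x.1 = T.ht y.1 := by
    rcases hxy with hxy | hxy
    · rw [hxy]
    · rw [← h.left.ht_snd x hx, ← h.right.ht_snd y hy, hxy]
  by_cases hxγ : T.ht x.1 < γ
  · have hx₂ := h.mem_right_of_lt x hx hxγ
    exact hxy.elim (h.right.injOn_fst hx₂ hy ·) (h.right.injOn_snd hx₂ hy ·)
  have hne := h.proj_ne hx hy (not_lt.1 hxγ) (hht ▸ not_lt.1 hxγ)
  rcases hxy with hxy | hxy
  exacts [absurd (congrArg (T.proj · γ) hxy) hne.1, absurd (congrArg (U.proj · γ) hxy) hne.2]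

theorem snd_lt (h : Amalgamable T U A₁ W₁ A₂ W₂ γ) {x y : α × β} (hx : x ∈ W₁)
    (hy : y ∈ W₂)     (hlt : T.lt x.1 y.1) : U.lt x.2 y.2 := by
  by_cases hxγ : T.ht x.1 < γ
  · exact h.right.snd_lt x (h.mem_right_of_lt x hx hxγ) y hy hlt
  refine absurd (STree.proj_eq_proj_of_le (Or.inl hlt) (not_lt.1 hxγ)) (h.proj_ne hx hy ?_ ?_).1
  exacts [not_lt.1 hxγ, (not_lt.1 hxγ).trans (T.ht_lt_ht hlt).le]

theorem mem_left_of_le (h : Amalgamable T U A₁ W₁ A₂ W₂ γ) {x : α × β} (hx : x ∈ W₁)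
    {a : Ordinal} (ha : a ∈ A₁ ∪ A₂) (hax : a ≤ T.ht x.1) : a ∈ A₁ := by
  rcases hax.lt_or_eq with hax | rfl
  · exact ha.elim id fun ha => h.mem_levels_left a ha x hx hax
  · exact h.left.ht_mem x hx

theorem isPreCond_union (h : Amalgamable T U A₁ W₁ A₂ W₂ γ) :
    IsPreCond T U (A₁ ∪ A₂) (W₁ ∪ W₂) where
  countable := h.left.countable.union h.right.countable
  injOn_fst := by
    rintro x (hx | hx) y (hy | hy) hxy
    exacts [h.left.injOn_fst hx hy hxy, h.eq_of_fst_eq_or_snd_eq hx hy (Or.inl hxy),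
      h.symm.eq_of_fst_eq_or_snd_eq hx hy (Or.inl hxy), h.right.injOn_fst hx hy hxy]
  injOn_snd := by
    rintro x (hx | hx) y (hy | hy) hxy
    exacts [h.left.injOn_snd hx hy hxy, h.eq_of_fst_eq_or_snd_eq hx hy (Or.inr hxy),
      h.symm.eq_of_fst_eq_or_snd_eq hx hy (Or.inr hxy), h.right.injOn_snd hx hy hxy]
  ht_mem
    | x, .inl hx => Or.inl (h.left.ht_mem x hx)
    | x, .inr hx => Or.inr (h.right.ht_mem x hx)
  ht_snd
    | x, .inl hx => h.left.ht_snd x hx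
    | x, .inr hx => h.right.ht_snd x hx
  projPair_mem
    | x, .inl hx, a, ha, hax => Or.inl (h.left.projPair_mem x hx a (h.mem_left_of_le hx ha hax) hax)
    | x, .inr hx, a, ha, hax =>
      Or.inr (h.right.projPair_mem x hx a (h.symm.mem_left_of_le hx ha.symm hax) hax)
  snd_lt := by
    rintro x (hx | hx) y (hy | hy) hlt
    exacts [h.left.snd_lt x hx y hy hlt, h.snd_lt hx hy hlt, h.symm.snd_lt hx hy hlt,
      h.right.snd_lt x hx y hy hlt]

end Amalgamable

end Amalgamation

theorem Cardinal.IsRegular.exists_lt_of_countable {κ : Cardinal.{u}} (hκ : κ.IsRegular)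
    (hκ₀ : Cardinal.aleph0 < κ) {S : Set Ordinal.{u}} (hS : S.Countable)
    (hlt : ∀ x ∈ S, x < κ.ord) : ∃ σ < κ.ord, ∀ x ∈ S, x < σ := by
  obtain ⟨f, hf⟩ := (hS.insert 0).exists_eq_range (Set.insert_nonempty _ _)
  refine ⟨⨆ i, f i + 1, Ordinal.lift_iSup_add_one_lt_of_lt_cof ?_ fun i => ?_, fun x hx => ?_⟩
  · simpa [hκ.cof_ord] using hκ₀
  · obtain hi | hi := (hf ▸ Set.mem_range_self i : f i ∈ insert 0 S)
    exacts [hi ▸ Cardinal.ord_pos.2 (Cardinal.aleph0_pos.trans hκ₀), hlt _ hi]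
  · obtain ⟨i, rfl⟩ := (hf ▸ Set.mem_insert_of_mem 0 hx : x ∈ Set.range f)
    exact (Order.lt_add_one_iff.2 le_rfl).trans_le (Ordinal.le_iSup (fun i => f i + 1) i)

theorem Cardinal.isRegular_aleph_two : (Cardinal.aleph 2).IsRegular := by
  simpa [one_add_one_eq_two] using Cardinal.isRegular_aleph_add_one 1

section Extension

variable {α β : Type u} {T : STree α} {U : STree β} {A : Set Ordinal} {W : Set (α × β)}
  {M M' : Set (α × β)} {z z' : α × β}

def ChainRel (T : STree α) (W : Set (α × β)) (x y : α × β) : Prop :=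
  x ∈ W ∧ y ∈ W ∧ T.lt x.1 y.1

def levels (T : STree α) (M : Set (α × β)) : Set Ordinal := (fun m => T.ht m.1) '' M

structure IsChainBound (T : STree α) (U : STree β) (A : Set Ordinal) (W M : Set (α × β))
    (z : α × β) : Prop where
  isMaxChain : IsMaxChain (ChainRel T W) M
  subset : M ⊆ W
  ht_snd : U.ht z.2 = T.ht z.1
  lt_ht : ∀ a ∈ A, a < T.ht z.1
  fst_lt : ∀ m ∈ M, T.lt m.1 z.1
  snd_lt : ∀ m ∈ M, U.lt m.2 z.2

namespace IsChainBound

theorem mem_of_comparable (hM : IsChainBound T U A W M z) (h : IsPreCond T U A W)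
    {x : α × β} (hx : x ∈ W)
    (hcmp : ∀ m ∈ M, T.lt x.1 m.1 ∨ x.1 = m.1 ∨ T.lt m.1 x.1) : x ∈ M := by
  have hchain : IsChain (ChainRel T W) (insert x M) := by
    refine hM.isMaxChain.1.insert fun m hm hne => ?_
    rcases hcmp m hm with hlt | heq | hlt
    · exact Or.inl ⟨hx, hM.subset hm, hlt⟩
    · exact absurd (h.injOn_fst hx (hM.subset hm) heq) hne
    · exact Or.inr ⟨hM.subset hm, hx, hlt⟩
  rw [hM.isMaxChain.2 hchain (Set.subset_insert x M)]
  exact Set.mem_insert x M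

theorem mem_of_fst_lt (hM : IsChainBound T U A W M z) (h : IsPreCond T U A W) {x : α × β}
    (hx : x ∈ W) (hlt : T.lt x.1 z.1) : x ∈ M :=
  hM.mem_of_comparable h hx fun m hm => T.lt_trichotomy_of_lt hlt (hM.fst_lt m hm)

theorem mem_of_snd_lt (hM : IsChainBound T U A W M z) (h : IsPreCond T U A W) {x : α × β}
    (hx : x ∈ W) (hlt : U.lt x.2 z.2) : x ∈ M := by
  refine hM.mem_of_comparable h hx fun m hm => ?_
  have hmW := hM.subset hm
  rcases U.lt_trichotomy_of_lt hlt (hM.snd_lt m hm) with h' | h' | h'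
  · exact Or.inl (h.fst_lt_of_snd_lt hx hmW h')
  · exact Or.inr (Or.inl (congrArg Prod.fst (h.injOn_snd hx hmW h')))
  · exact Or.inr (Or.inr (h.fst_lt_of_snd_lt hmW hx h'))

theorem lt_ht_snd (hM : IsChainBound T U A W M z) {a : Ordinal} (ha : a ∈ A) : a < U.ht z.2 :=
  hM.ht_snd ▸ hM.lt_ht a ha

theorem ht_projPair (hM : IsChainBound T U A W M z) {a : Ordinal} (ha : a ∈ A) :
    T.ht (projPair T U z a).1 = a ∧ U.ht (projPair T U z a).2 = a :=
  ⟨STree.ht_proj (hM.lt_ht a ha).le, STree.ht_proj (hM.lt_ht_snd ha).le⟩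

theorem ne_projPair (hM : IsChainBound T U A W M z) (h : IsPreCond T U A W) {x : α × β}
    (hx : x ∈ W) {a : Ordinal} (ha : a ∈ A) (haM : a ∉ levels T M) :
    x.1 ≠ T.proj z.1 a ∧ x.2 ≠ U.proj z.2 a := by
  have haz : a < T.ht z.1 := hM.lt_ht a ha
  constructor
  · intro he
    have hxM := hM.mem_of_fst_lt h hx (he ▸ STree.proj_lt haz)
    exact haM ⟨x, hxM, (congrArg T.ht he).trans (STree.ht_proj haz.le)⟩
  · intro he
    have hxM := hM.mem_of_snd_lt h hx (he ▸ STree.proj_lt (hM.lt_ht_snd ha))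
    refine haM ⟨x, hxM, ?_⟩
    change T.ht x.1 = a
    rw [← h.ht_snd x hx, he]
    exact (hM.ht_projPair ha).2

theorem ht_lt_of_proj_eq (hM : IsChainBound T U A W M z) (hM' : IsChainBound T U A W M' z')
    (h : IsPreCond T U A W) {a : Ordinal} (ha : a ∈ A) (haM' : a ∉ levels T M')
    (he : T.proj z.1 a = T.proj z'.1 a ∨ U.proj z.2 a = U.proj z'.2 a) {m : α × β}
    (hm : m ∈ M) : T.ht m.1 < a := by
  by_contra! hle
  have hmW := hM.subset hm
  have hne := hM'.ne_projPair h (h.projPair_mem m hmW a ha hle) ha haM'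
  rcases he with he | he
  · refine hne.1 ?_
    rw [projPair_fst, STree.proj_eq_proj_of_le (Or.inl (hM.fst_lt m hm)) hle, he]
  · refine hne.2 ?_
    rw [projPair_snd, STree.proj_eq_proj_of_le (Or.inl (hM.snd_lt m hm)) (h.ht_snd m hmW ▸ hle),
      he]

theorem subset_of_proj_eq (hM : IsChainBound T U A W M z) (hM' : IsChainBound T U A W M' z')
    (h : IsPreCond T U A W) {a : Ordinal} (ha : a ∈ A) (haM : a ∉ levels T M)
    (he : T.proj z.1 a = T.proj z'.1 a ∨ U.proj z.2 a = U.proj z'.2 a) : M' ⊆ M := by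
  intro m hm
  have hmW := hM'.subset hm
  have hma := hM'.ht_lt_of_proj_eq hM h ha haM (he.imp Eq.symm Eq.symm) hm
  rcases he with he | he
  · refine hM.mem_of_fst_lt h hmW (T.lt_of_lt_of_le ?_ (STree.proj_le (hM.lt_ht a ha).le))
    rw [he]
    exact STree.lt_proj (Or.inl (hM'.fst_lt m hm)) hma (hM'.lt_ht a ha).le
  · refine hM.mem_of_snd_lt h hmW (U.lt_of_lt_of_le ?_ (STree.proj_le (hM.lt_ht_snd ha).le))
    rw [he]
    exact STree.lt_proj (Or.inl (hM'.snd_lt m hm)) (h.ht_snd m hmW ▸ hma) (hM'.lt_ht_snd ha).le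

theorem projPair_ht_eq (hM : IsChainBound T U A W M z) (h : IsPreCond T U A W) {m : α × β}
    (hm : m ∈ M) : projPair T U z (T.ht m.1) = m :=
  Prod.ext (STree.proj_eq_of_le (Or.inl (hM.fst_lt m hm)) rfl)
    (STree.proj_eq_of_le (Or.inl (hM.snd_lt m hm)) (h.ht_snd m (hM.subset hm)))

theorem notMem_levels_of_proj_eq (hM : IsChainBound T U A W M z)
    (hM' : IsChainBound T U A W M' z') (h : IsPreCond T U A W) {a : Ordinal} (ha : a ∈ A)
    (haM : a ∉ levels T M) (he : T.proj z.1 a = T.proj z'.1 a ∨ U.proj z.2 a = U.proj z'.2 a) :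
    a ∉ levels T M' := by
  rintro ⟨m, hm, rfl⟩
  have hne := hM.ne_projPair h (hM'.subset hm) ha haM
  have hm' := hM'.projPair_ht_eq h hm
  refine he.elim (fun he => hne.1 ?_) (fun he => hne.2 ?_)
  · rw [he]
    exact (congrArg Prod.fst hm').symm
  · rw [he]
    exact (congrArg Prod.snd hm').symm

theorem eq_of_proj_eq (hM : IsChainBound T U A W M z) (hM' : IsChainBound T U A W M' z')
    (h : IsPreCond T U A W) {a : Ordinal} (ha : a ∈ A) (haM : a ∉ levels T M)
    (he : T.proj z.1 a = T.proj z'.1 a ∨ U.proj z.2 a = U.proj z'.2 a) : M = M' :=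
  have haM' := hM.notMem_levels_of_proj_eq hM' h ha haM he
  (hM'.subset_of_proj_eq hM h ha haM' (he.imp Eq.symm Eq.symm)).antisymm
    (hM.subset_of_proj_eq hM' h ha haM he)

end IsChainBound

theorem IsChain.image_fst (hM : IsChain (ChainRel T W) M) : T.IsChain (Prod.fst '' M) := by
  rintro _ ⟨m, hm, rfl⟩ _ ⟨m', hm', rfl⟩
  by_cases hne : m = m'
  · exact Or.inl (hne ▸ T.le_rfl)
  · exact (hM hm hm' hne).imp (fun h => Or.inl h.2.2) (fun h => Or.inl h.2.2)

theorem IsChain.image_snd (hM : IsChain (ChainRel T W) M) (h : IsPreCond T U A W)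
    (hMW : M ⊆ W) : U.IsChain (Prod.snd '' M) := by
  rintro _ ⟨m, hm, rfl⟩ _ ⟨m', hm', rfl⟩
  by_cases hne : m = m'
  · exact Or.inl (hne ▸ U.le_rfl)
  · exact (hM hm hm' hne).imp (fun h' => Or.inl (h.snd_lt _ (hMW hm) _ (hMW hm') h'.2.2))
      (fun h' => Or.inl (h.snd_lt _ (hMW hm') _ (hMW hm) h'.2.2))

theorem exists_isChainBound (hT : NiceTree T) (hU : NiceTree U) (h : IsPreCond T U A W)
    (hAc : A.Countable) (hA : A ⊆ cofW1) (hM : IsMaxChain (ChainRel T W) M) (hMW : M ⊆ W) :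
    ∃ z, IsChainBound T U A W M z := by
  have hMc : M.Countable := h.countable.mono hMW
  obtain ⟨u, hu⟩ := hT.2.2.1 _ (hMc.image _) hM.1.image_fst
  obtain ⟨v, hv⟩ := hU.2.2.1 _ (hMc.image _) (hM.1.image_snd h hMW)
  obtain ⟨σ, hσ, hlt⟩ := Cardinal.isRegular_aleph_two.exists_lt_of_countable
    (Cardinal.aleph0_lt_aleph.2 two_pos) (((hAc.insert _).insert _))
    (by
      rintro x (rfl | rfl | hx)
      exacts [hT.1.1 u, hU.1.1 v, (hA hx).1])
  obtain ⟨y, huy, hy⟩ := hT.2.1.1 u σ (hlt _ (Or.inl rfl)) hσ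
  obtain ⟨y', hvy', hy'⟩ := hU.2.1.1 v σ (hlt _ (Or.inr (Or.inl rfl))) hσ
  exact ⟨(y, y'), hM, hMW, hy'.trans hy.symm, fun a ha => hy ▸ hlt a (Or.inr (Or.inr ha)),
    fun m hm => T.lt_of_le_of_lt (hu _ ⟨m, hm, rfl⟩) huy,
    fun m hm => U.lt_of_le_of_lt (hv _ ⟨m, hm, rfl⟩) hvy'⟩

/-- `C r` is meant to be a maximal chain through `r` and `Z (C r)` its bound; indexing `Z` by
the chain rather than by `r` makes equal chains contribute the same nodes. -/
def extensionNodes (T : STree α) (U : STree β) (A : Set Ordinal) (W : Set (α × β))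
    (C : α × β → Set (α × β)) (Z : Set (α × β) → α × β) : Set (α × β) :=
  {x | ∃ r ∈ W, ∃ a ∈ A, a ∉ levels T (C r) ∧ x = projPair T U (Z (C r)) a}

variable {C : α × β → Set (α × β)} {Z : Set (α × β) → α × β}

theorem countable_extensionNodes (hW : W.Countable) (hA : A.Countable) :
    (extensionNodes T U A W C Z).Countable :=
  ((hW.prod hA).image fun p => projPair T U (Z (C p.1)) p.2).mono <| by
    rintro _ ⟨r, hr, a, ha, -, rfl⟩
    exact ⟨(r, a), ⟨hr, ha⟩, rfl⟩

theorem ht_snd_union_extensionNodes (h : IsPreCond T U A W)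
    (hCZ : ∀ r ∈ W, r ∈ C r ∧ IsChainBound T U A W (C r) (Z (C r))) :
    ∀ x ∈ W ∪ extensionNodes T U A W C Z, U.ht x.2 = T.ht x.1 ∧ T.ht x.1 ∈ A := by
  rintro x (hx | ⟨r, hr, a, ha, -, rfl⟩)
  · exact ⟨h.ht_snd x hx, h.ht_mem x hx⟩
  · obtain ⟨h1, h2⟩ := (hCZ r hr).2.ht_projPair ha
    exact ⟨h2.trans h1.symm, h1.symm ▸ ha⟩

theorem eq_of_mem_union_extensionNodes (h : IsPreCond T U A W)
    (hCZ : ∀ r ∈ W, r ∈ C r ∧ IsChainBound T U A W (C r) (Z (C r))) {x y : α × β}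
    (hx : x ∈ W ∪ extensionNodes T U A W C Z) (hy : y ∈ W ∪ extensionNodes T U A W C Z)
    (hxy : x.1 = y.1 ∨ x.2 = y.2) : x = y := by
  have hht : T.ht x.1 = T.ht y.1 := by
    rcases hxy with hxy | hxy
    · rw [hxy]
    · rw [← (ht_snd_union_extensionNodes h hCZ x hx).1,
        ← (ht_snd_union_extensionNodes h hCZ y hy).1, hxy]
  rcases hx with hx | ⟨r, hr, a, ha, haM, rfl⟩ <;>
    rcases hy with hy | ⟨r', hr', a', ha', haM', rfl⟩
  · exact hxy.elim (h.injOn_fst hx hy ·) (h.injOn_snd hx hy ·)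
  · exact absurd hxy (not_or.2 ((hCZ r' hr').2.ne_projPair h hx ha' haM'))
  · exact absurd (hxy.imp Eq.symm Eq.symm) (not_or.2 ((hCZ r hr).2.ne_projPair h hy ha haM))
  obtain rfl : a = a' := by
    rwa [((hCZ r hr).2.ht_projPair ha).1, ((hCZ r' hr').2.ht_projPair ha').1] at hht
  rw [(hCZ r hr).2.eq_of_proj_eq (hCZ r' hr').2 h ha haM hxy]

theorem exists_mem_union_extensionNodes
    (hCZ : ∀ r ∈ W, r ∈ C r ∧ IsChainBound T U A W (C r) (Z (C r))) {r : α × β}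
    (hr : r ∈ W) {x : α} (hxz : T.le x (Z (C r)).1) {b : Ordinal} (hb : b ∈ A)
    (hxb : T.ht x < b) :
    ∃ y ∈ W ∪ extensionNodes T U A W C Z, T.ht y.1 = b ∧ T.lt x y.1 := by
  have hM := (hCZ r hr).2
  by_cases hbM : b ∈ levels T (C r)
  · obtain ⟨m, hm, rfl⟩ := hbM
    exact ⟨m, Or.inl (hM.subset hm), rfl,
      T.lt_of_le_of_le_of_ht_lt hxz (Or.inl (hM.fst_lt m hm)) hxb⟩
  · exact ⟨_, Or.inr ⟨r, hr, b, hb, hbM, rfl⟩, (hM.ht_projPair hb).1,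
      STree.lt_proj hxz hxb (hM.lt_ht b hb).le⟩

theorem projPair_mem_union_extensionNodes (h : IsPreCond T U A W)
    (hCZ : ∀ r ∈ W, r ∈ C r ∧ IsChainBound T U A W (C r) (Z (C r))) :
    ∀ x ∈ W ∪ extensionNodes T U A W C Z, ∀ b ∈ A, b ≤ T.ht x.1 →
      projPair T U x b ∈ W ∪ extensionNodes T U A W C Z := by
  rintro x (hx | ⟨r, hr, a, ha, haM, rfl⟩) b hb hbx
  · exact Or.inl (h.projPair_mem x hx b hb hbx)
  have hM := (hCZ r hr).2
  rw [(hM.ht_projPair ha).1] at hbx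
  rw [projPair_projPair hM.ht_snd hbx (hM.lt_ht a ha).le]
  by_cases hbM : b ∈ levels T (C r)
  · obtain ⟨m, hm, rfl⟩ := hbM
    exact Or.inl ((hM.projPair_ht_eq h hm).symm ▸ hM.subset hm)
  · exact Or.inr ⟨r, hr, b, hb, hbM, rfl⟩

theorem snd_lt_union_extensionNodes (h : IsPreCond T U A W)
    (hCZ : ∀ r ∈ W, r ∈ C r ∧ IsChainBound T U A W (C r) (Z (C r))) :
    ∀ x ∈ W ∪ extensionNodes T U A W C Z, ∀ y ∈ W ∪ extensionNodes T U A W C Z,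
      T.lt x.1 y.1 → U.lt x.2 y.2 := by
  rintro x (hx | ⟨r, hr, a, ha, haM, rfl⟩) y (hy | ⟨r', hr', a', ha', haM', rfl⟩) hlt
  · exact h.snd_lt x hx y hy hlt
  · have hM' := (hCZ r' hr').2
    have hxM' := hM'.mem_of_fst_lt h hx (T.lt_of_lt_of_le hlt (STree.proj_le (hM'.lt_ht a' ha').le))
    refine STree.lt_proj (Or.inl (hM'.snd_lt x hxM')) ?_ (hM'.lt_ht_snd ha').le
    rw [h.ht_snd x hx, ← (hM'.ht_projPair ha').1]
    exact T.ht_lt_ht hlt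
  · have hM := (hCZ r hr).2
    have hay : a ≤ T.ht y.1 := (hM.ht_projPair ha).1 ▸ (T.ht_lt_ht hlt).le
    refine absurd ?_ (hM.ne_projPair h (h.projPair_mem y hy a ha hay) ha haM).1
    exact STree.proj_eq_of_le (Or.inl hlt) (hM.ht_projPair ha).1
  · have hM := (hCZ r hr).2
    have hM' := (hCZ r' hr').2
    have haa' : a < a' := by
      simpa only [(hM.ht_projPair ha).1, (hM'.ht_projPair ha').1] using T.ht_lt_ht hlt
    have he : T.proj (Z (C r)).1 a = T.proj (Z (C r')).1 a := by
      rw [← STree.proj_proj haa'.le (hM'.lt_ht a' ha').le]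
      exact (STree.proj_eq_of_le (Or.inl hlt) (hM.ht_projPair ha).1).symm
    rw [hM.eq_of_proj_eq hM' h ha haM (Or.inl he)]
    exact STree.proj_lt_proj haa' (hM'.lt_ht_snd ha').le

theorem isPreCond_union_extensionNodes (h : IsPreCond T U A W) (hA : A.Countable)
    (hCZ : ∀ r ∈ W, r ∈ C r ∧ IsChainBound T U A W (C r) (Z (C r))) :
    IsPreCond T U A (W ∪ extensionNodes T U A W C Z) where
  countable := h.countable.union (countable_extensionNodes h.countable hA)
  injOn_fst _ hx _ hy hxy := eq_of_mem_union_extensionNodes h hCZ hx hy (Or.inl hxy)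
  injOn_snd _ hx _ hy hxy := eq_of_mem_union_extensionNodes h hCZ hx hy (Or.inr hxy)
  ht_mem x hx := (ht_snd_union_extensionNodes h hCZ x hx).2
  ht_snd x hx := (ht_snd_union_extensionNodes h hCZ x hx).1
  projPair_mem := projPair_mem_union_extensionNodes h hCZ
  snd_lt := snd_lt_union_extensionNodes h hCZ

theorem exists_isMaxChain_mem {r : α × β} (hr : r ∈ W) :
    ∃ M, r ∈ M ∧ IsMaxChain (ChainRel T W) M ∧ M ⊆ W := by
  obtain ⟨M, hM, hrM⟩ := (IsChain.singleton (r := ChainRel T W) (a := r)).exists_maxChain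
  refine ⟨M, hrM rfl, hM, fun m hm => ?_⟩
  by_cases hmr : m = r
  · exact hmr ▸ hr
  · exact (hM.1 hm (hrM rfl) hmr).elim (·.1) (·.2.1)

theorem IsPreCond.exists_isCond (hT : NiceTree T) (hU : NiceTree U) (h : IsPreCond T U A W)
    (hAc : A.Countable) (hA : A ⊆ cofW1) : ∃ W', W ⊆ W' ∧ IsCond T U ⟨A, W'⟩ := by
  -- the case split only provides the inhabitant of `α × β` that `choose!` needs
  rcases W.eq_empty_or_nonempty with rfl | ⟨w, -⟩
  · exact ⟨∅, subset_rfl, h.isCond hAc hA (by simp)⟩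
  have : Nonempty (α × β) := ⟨w⟩
  choose! C hC using fun r (hr : r ∈ W) => exists_isMaxChain_mem (T := T) hr
  choose! Z hZ using fun M (hM : IsMaxChain (ChainRel T W) M) (hMW : M ⊆ W) =>
    exists_isChainBound hT hU h hAc hA hM hMW
  have hCZ : ∀ r ∈ W, r ∈ C r ∧ IsChainBound T U A W (C r) (Z (C r)) :=
    fun r hr => ⟨(hC r hr).1, hZ _ (hC r hr).2.1 (hC r hr).2.2⟩
  refine ⟨_, Set.subset_union_left, (isPreCond_union_extensionNodes h hAc hCZ).isCond hAc hA ?_⟩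
  rintro x (hx | ⟨r, hr, a, ha, -, rfl⟩) b hb hxb
  · exact exists_mem_union_extensionNodes hCZ hx
      (Or.inl ((hCZ x hx).2.fst_lt x (hCZ x hx).1)) hb hxb
  · exact exists_mem_union_extensionNodes hCZ hr
      (STree.proj_le ((hCZ r hr).2.lt_ht a ha).le) hb hxb

end Extension

section Compatibility

variable {α β : Type u} {T : STree α} {U : STree β} {p q : PPair α β} {γ ξ : Ordinal}

theorem mem_F_of_restrC_eq (h : restrC T p γ = restrC T q ξ) {x : α × β} (hx : x ∈ p.F)
    (hxγ : T.ht x.1 < γ) : x ∈ q.F :=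
  (show x ∈ (restrC T q ξ).F from h ▸ ⟨hx, hxγ⟩).1

theorem mem_A_of_restrC_eq (h : restrC T p γ = restrC T q ξ) {a : Ordinal} (ha : a ∈ p.A)
    (haγ : a < γ) : a ∈ q.A ∧ a < ξ :=
  show a ∈ (restrC T q ξ).A from h ▸ ⟨ha, haγ⟩

theorem inGapBelow_of_restrC_eq (h : restrC T p γ = restrC T q ξ) (hAξ : ∀ a ∈ p.A, a < ξ) :
    InGapBelow {δ ∈ p.A | γ ≤ δ} q.A ξ :=
  fun δ hδ =>
    ⟨hAξ δ hδ.1, fun _ ha haξ => (mem_A_of_restrC_eq h.symm ha haξ).2.trans_le hδ.2⟩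

theorem IsPreCond.ne_proj_of_incomparable {A : Set Ordinal} {W : Set (α × β)}
    (h : IsPreCond T U A W) (hξ : ξ ∈ A) {x t : α × β} (ht : t ∈ W)
    (htξ : ξ ≤ T.ht t.1) (hγξ : γ ≤ ξ)
    (hincT : ∀ s ∈ W, T.ht s.1 = ξ → ¬ T.le x.1 s.1)
    (hincU : ∀ s ∈ W, U.ht s.2 = ξ → ¬ U.le x.2 s.2) :
    x.1 ≠ T.proj t.1 γ ∧ x.2 ≠ U.proj t.2 γ := by
  have hs := h.projPair_mem t ht ξ hξ htξ
  obtain ⟨hs1, hs2⟩ := h.ht_projPair ht htξ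
  refine ⟨fun he => hincT _ hs hs1 ?_, fun he => hincU _ hs hs2 ?_⟩
  · rw [he, ← STree.proj_proj hγξ htξ]
    exact STree.proj_le (hγξ.trans_eq hs1.symm)
  · rw [he, ← STree.proj_proj hγξ ((h.ht_snd t ht).symm ▸ htξ)]
    exact STree.proj_le (hγξ.trans_eq hs2.symm)

theorem amalgamable_lowerProj (hp : IsCond T U p) (hq : IsCond T U q) (hγ : γ ∈ p.A)
    (hξ : ξ ∈ q.A) (hAξ : ∀ a ∈ p.A, a < ξ) (hrestr : restrC T p γ = restrC T q ξ)
    (hinjq : InjOn' T q ξ)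
    (hincT : ∀ r ∈ p.F, T.ht r.1 = γ → ∀ s ∈ q.F, T.ht s.1 = ξ →
      ¬ T.le r.1 s.1 ∧ ¬ T.le s.1 r.1)
    (hincU : ∀ r ∈ p.F, U.ht r.2 = γ → ∀ s ∈ q.F, U.ht s.2 = ξ →
      ¬ U.le r.2 s.2 ∧ ¬ U.le s.2 r.2) :
    Amalgamable T U p.A p.F (q.A ∪ {δ ∈ p.A | γ ≤ δ})
      (q.F ∪ lowerProj T U q.F ξ {δ ∈ p.A | γ ≤ δ}) γ := by
  have hD := inGapBelow_of_restrC_eq hrestr hAξ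
  refine ⟨hp.isPreCond,
    hq.isPreCond.union_lowerProj hξ hinjq (hp.1.mono (Set.sep_subset _ _)) hD, hγ,
    Or.inr ⟨hγ, le_rfl⟩, ?_, ?_, ?_, ?_, ?_⟩
  · rintro a (ha | ha) x hx hax
    · exact (mem_A_of_restrC_eq hrestr.symm ha (hax.trans (hAξ _ (hp.isPreCond.ht_mem x hx)))).1
    · exact ha.1
  · intro a ha _ _ _
    by_cases hγa : γ ≤ a
    exacts [Or.inr ⟨ha, hγa⟩, Or.inl (mem_A_of_restrC_eq hrestr ha (not_le.1 hγa)).1]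
  · exact fun x hx hxγ => Or.inl (mem_F_of_restrC_eq hrestr hx hxγ)
  · rintro y (hy | hy) hyγ
    · exact mem_F_of_restrC_eq hrestr.symm hy (hyγ.trans (hAξ γ hγ))
    · exact absurd ((hq.isPreCond.ht_mem_lowerProj hD hy).1.2) (not_le.2 hyγ)
  · rintro x hx y (hy | ⟨t, ht, htξ, δ, hδ, rfl⟩) hxγ hyγ
    · exact absurd (hyγ ▸ hq.isPreCond.ht_mem y hy) (hD.notMem ⟨hγ, le_rfl⟩)
    obtain rfl : δ = γ :=
      (hq.isPreCond.ht_projPair ht ((hD δ hδ).1.le.trans htξ)).1.symm.trans hyγ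
    refine hq.isPreCond.ne_proj_of_incomparable hξ ht htξ (hD δ hδ).1.le
      (fun s hs hsξ => (hincT x hx hxγ s hs hsξ).1) (fun s hs hsξ => ?_)
    exact (hincU x hx ((hp.isPreCond.ht_snd x hx).trans hxγ) s hs hsξ).1

end Compatibility

theorem statement_17_general {α β : Type u} (T : STree α) (U : STree β)
    (hT : NiceTree T) (hU : NiceTree U)
    (p q : PPair α β) (hp : IsCond T U p) (hq : IsCond T U q)
    (γ ξ : Ordinal) (hγ : γ ∈ p.A) (hξ : ξ ∈ q.A)
    (hAsub : ∀ a ∈ p.A, a < ξ)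
    (hrestr : restrC T p γ = restrC T q ξ)
    (hinjq : InjOn' T q ξ)
    (hincT : ∀ r ∈ p.F, T.ht r.1 = γ → ∀ s ∈ q.F, T.ht s.1 = ξ →
      ¬ T.le r.1 s.1 ∧ ¬ T.le s.1 r.1)
    (hincU : ∀ r ∈ p.F, U.ht r.2 = γ → ∀ s ∈ q.F, U.ht s.2 = ξ →
      ¬ U.le r.2 s.2 ∧ ¬ U.le s.2 r.2) :
    ∃ w : PPair α β, IsCond T U w ∧ CondLe w p ∧ CondLe w q := by
  have hpq := amalgamable_lowerProj hp hq hγ hξ hAsub hrestr hinjq hincT hincU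
  have hD : {δ ∈ p.A | γ ≤ δ} ⊆ p.A := Set.sep_subset _ _
  obtain ⟨W, hW, hcond⟩ := hpq.isPreCond_union.exists_isCond hT hU
    (hp.1.union (hq.1.union (hp.1.mono hD)))
    (Set.union_subset hp.2.1 (Set.union_subset hq.2.1 (hD.trans hp.2.1)))
  exact ⟨_, hcond, ⟨Set.subset_union_left, fun x hx => hW (Or.inl hx)⟩,
    ⟨fun a ha => Or.inr (Or.inl ha), fun x hx => hW (Or.inr (Or.inl hx))⟩⟩

theorem statement_17 (hCH : CH) {α β : Type u} (T : STree α) (U : STree β)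
    (hT : NiceTree T) (hU : NiceTree U)
    (p q : PPair α β) (hp : IsCond T U p) (hq : IsCond T U q)
    (γ ξ : Ordinal) (hγξ : γ < ξ) (hγ : γ ∈ p.A) (hξ : ξ ∈ q.A)
    (hAsub : ∀ a ∈ p.A, a < ξ)
    (hrestr : restrC T p γ = restrC T q ξ)
    (hinjp : InjOn' T p γ) (hinjq : InjOn' T q ξ)
    (hincT : ∀ r ∈ p.F, T.ht r.1 = γ → ∀ s ∈ q.F, T.ht s.1 = ξ →
      ¬ T.le r.1 s.1 ∧ ¬ T.le s.1 r.1)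
    (hincU : ∀ r ∈ p.F, U.ht r.2 = γ → ∀ s ∈ q.F, U.ht s.2 = ξ →
      ¬ U.le r.2 s.2 ∧ ¬ U.le s.2 r.2) :
    ∃ w : PPair α β, IsCond T U w ∧ CondLe w p ∧ CondLe w q :=
  statement_17_general T U hT hU p q hp hq γ ξ hγ hξ hAsub hrestr hinjq hincT hincU
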